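/- arXiv:2009.13223 — 2 statements merged into one kernel-verified Lean document; each statement's English description precedes it below -/
import Mathlib

section
/- Two uniformly equivalent structures on a compact metric space have the same collection of superenvelopes, and in particular the same minimal superenvelope. -/
open Filter Topology

/-- A structure on `M`. -/
def IsEntStructure {M : Type*} (f : ℕ → M → ℝ) : Prop :=
  (∀ k x, f k x ≤ f (k + 1) x) ∧ (∀ k x, 0 ≤ f k x) ∧
  (∃ C, ∀ k x, f k x ≤ C) ∧ (∀ x, f 0 x = 0)

/-- The upper semicontinuous envelope of `f`. -/
noncomputable def uscEnv {M : Type*} [TopologicalSpace M] (f : M → ℝ) (μ : M) : ℝ :=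
  limsup f (𝓝 μ)

/-- The defect of `f`: its u.s.c. envelope minus `f`. -/
noncomputable def defect {M : Type*} [TopologicalSpace M] (f : M → ℝ) (μ : M) : ℝ :=
  uscEnv f μ - f μ

/-- A finite (real-valued) superenvelope of the structure `f`. -/
def IsFinSuperenvelope {M : Type*} [TopologicalSpace M] (f : ℕ → M → ℝ) (E : M → ℝ) : Prop :=
  (∀ k x, f k x ≤ E x) ∧
  ∀ x, Tendsto (fun k => defect (fun y => E y - f k y) x) atTop (𝓝 0)

/-- A superenvelope with values in `EReal`: either the constant `⊤`, or a finite
superenvelope. -/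
def IsSuperenvelope {M : Type*} [TopologicalSpace M] (f : ℕ → M → ℝ) (E : M → EReal) : Prop :=
  (∀ x, E x = ⊤) ∨
  ∃ E' : M → ℝ, (∀ x, E x = (E' x : EReal)) ∧ IsFinSuperenvelope f E'


/-- Uniform equivalence of structures. -/
def UnifEquiv {M : Type*} (f f' : ℕ → M → ℝ) : Prop :=
  ∀ ε > (0 : ℝ), ∀ k₀ : ℕ, ∃ k : ℕ,
    (∀ x, f k₀ x - ε < f' k x) ∧ (∀ x, f' k₀ x - ε < f k x)

/-- Basic facts about the sequence `k ↦ limsup (E - g k) (𝓝 x)` when `E` is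
locally bounded above at `x`. -/
lemma limsup_mono_facts {M : Type*} [TopologicalSpace M] (g : ℕ → M → ℝ) (E : M → ℝ) (x : M)
    (b : ℝ) (hb : ∀ᶠ y in 𝓝 x, E y ≤ b) (hg0 : ∀ k y, 0 ≤ g k y) (hgE : ∀ k y, g k y ≤ E y)
    (hgmono : ∀ y, Monotone fun k => g k y) :
    (∀ k, 0 ≤ limsup (fun y => E y - g k y) (𝓝 x)) ∧
    BddBelow (Set.range fun k => limsup (fun y => E y - g k y) (𝓝 x)) ∧
    Tendsto (fun k => limsup (fun y => E y - g k y) (𝓝 x)) atTop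
      (𝓝 (⨅ k, limsup (fun y => E y - g k y) (𝓝 x))) := by
  have hba : ∀ k, IsBoundedUnder (· ≤ ·) (𝓝 x) (fun y => E y - g k y) := fun k =>
    ⟨b, eventually_map.mpr (hb.mono fun y hy => by have := hg0 k y; linarith)⟩
  have hbb : ∀ k, IsBoundedUnder (· ≥ ·) (𝓝 x) (fun y => E y - g k y) := fun k =>
    ⟨0, eventually_map.mpr (Eventually.of_forall fun y => sub_nonneg.2 (hgE k y))⟩
  have hL0 : ∀ k, 0 ≤ limsup (fun y => E y - g k y) (𝓝 x) := fun k =>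
    le_limsup_of_frequently_le
      ((Eventually.of_forall fun y => sub_nonneg.2 (hgE k y)).frequently) (hba k)
  have hanti : Antitone fun k => limsup (fun y => E y - g k y) (𝓝 x) := by
    intro k k' hkk'
    exact limsup_le_limsup
      (Eventually.of_forall fun y => sub_le_sub_left (hgmono y hkk') (E y))
      ((hbb k').isCoboundedUnder_le) (hba k)
  refine ⟨hL0, ⟨0, ?_⟩, ?_⟩
  · rintro _ ⟨k, rfl⟩; exact hL0 k
  · exact tendsto_atTop_ciInf hanti ⟨0, by rintro _ ⟨k, rfl⟩; exact hL0 k⟩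

/-- One-sided comparison of the limit infima of the limsups. -/
lemma iInf_limsup_le {M : Type*} [TopologicalSpace M] (g g' : ℕ → M → ℝ) (E : M → ℝ) (x : M)
    (b : ℝ) (hb : ∀ᶠ y in 𝓝 x, E y ≤ b)
    (hg0 : ∀ k y, 0 ≤ g k y) (hgE : ∀ k y, g k y ≤ E y)
    (hg'0 : ∀ k y, 0 ≤ g' k y) (hg'E : ∀ k y, g' k y ≤ E y)
    (hcmp : ∀ ε > (0 : ℝ), ∀ k₀ : ℕ, ∃ k : ℕ, ∀ y, g k₀ y - ε < g' k y) :
    (⨅ k, limsup (fun y => E y - g' k y) (𝓝 x)) ≤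
      ⨅ k, limsup (fun y => E y - g k y) (𝓝 x) := by
  have hba : ∀ k, IsBoundedUnder (· ≤ ·) (𝓝 x) (fun y => E y - g k y) := fun k =>
    ⟨b, eventually_map.mpr (hb.mono fun y hy => by have := hg0 k y; linarith)⟩
  have hbb : ∀ k, IsBoundedUnder (· ≥ ·) (𝓝 x) (fun y => E y - g k y) := fun k =>
    ⟨0, eventually_map.mpr (Eventually.of_forall fun y => sub_nonneg.2 (hgE k y))⟩
  have hbb' : ∀ k, IsBoundedUnder (· ≥ ·) (𝓝 x) (fun y => E y - g' k y) := fun k =>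
    ⟨0, eventually_map.mpr (Eventually.of_forall fun y => sub_nonneg.2 (hg'E k y))⟩
  have hbdd' : BddBelow (Set.range fun k => limsup (fun y => E y - g' k y) (𝓝 x)) := by
    refine ⟨0, ?_⟩
    rintro _ ⟨k, rfl⟩
    exact le_limsup_of_frequently_le
      ((Eventually.of_forall fun y => sub_nonneg.2 (hg'E k y)).frequently)
      ⟨b, eventually_map.mpr (hb.mono fun y hy => by have := hg'0 k y; linarith)⟩
  refine le_of_forall_pos_le_add fun ε hε => ?_
  have hstep : ∀ k₀ : ℕ, (⨅ k, limsup (fun y => E y - g' k y) (𝓝 x)) - ε ≤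
      limsup (fun y => E y - g k₀ y) (𝓝 x) := by
    intro k₀
    obtain ⟨k, hk⟩ := hcmp ε hε k₀
    have h1 : (⨅ j, limsup (fun y => E y - g' j y) (𝓝 x)) ≤
        limsup (fun y => E y - g' k y) (𝓝 x) := ciInf_le hbdd' k
    have hle : ∀ y, E y - g' k y ≤ (E y - g k₀ y) + ε := fun y => by
      have := hk y; linarith
    have h2 : limsup (fun y => E y - g' k y) (𝓝 x) ≤
        limsup (fun y => (E y - g k₀ y) + ε) (𝓝 x) :=
      limsup_le_limsup (Eventually.of_forall hle)
        ((hbb' k).isCoboundedUnder_le)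
        ⟨b + ε, eventually_map.mpr (hb.mono fun y hy => by have := hg0 k₀ y; linarith)⟩
    have h3 : limsup (fun y => (E y - g k₀ y) + ε) (𝓝 x) =
        limsup (fun y => E y - g k₀ y) (𝓝 x) + ε :=
      limsup_add_const (𝓝 x) (fun y => E y - g k₀ y) ε (hba k₀)
        ((hbb k₀).isCoboundedUnder_le)
    have := h1.trans (h2.trans h3.le)
    linarith
  have : (⨅ k, limsup (fun y => E y - g' k y) (𝓝 x)) - ε ≤
      ⨅ k, limsup (fun y => E y - g k y) (𝓝 x) := le_ciInf hstep
  linarith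

/-- A finite superenvelope transfers between uniformly equivalent structures. -/
lemma finTransfer {M : Type*} [TopologicalSpace M] {f f' : ℕ → M → ℝ}
    (hf : IsEntStructure f) (hf' : IsEntStructure f') (h : UnifEquiv f f')
    {E : M → ℝ} (hE : IsFinSuperenvelope f E) : IsFinSuperenvelope f' E := by
  obtain ⟨hfm, hf0, ⟨C, hC⟩, -⟩ := hf
  obtain ⟨hf'm, hf'0, ⟨C', hC'⟩, -⟩ := hf'
  obtain ⟨hEf, hdef⟩ := hE
  have hfmono : ∀ y, Monotone fun k => f k y := fun y =>
    monotone_nat_of_le_succ fun k => hfm k y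
  have hf'mono : ∀ y, Monotone fun k => f' k y := fun y =>
    monotone_nat_of_le_succ fun k => hf'm k y
  -- f' is dominated by E
  have hEf' : ∀ k y, f' k y ≤ E y := by
    intro k y
    refine le_of_forall_pos_le_add fun ε hε => ?_
    obtain ⟨j, -, h2⟩ := h ε hε k
    have := h2 y
    have := hEf j y
    linarith
  have hbddf : ∀ y, BddAbove (Set.range fun k => f k y) := fun y =>
    ⟨C, by rintro _ ⟨k, rfl⟩; exact hC k y⟩
  have hbddf' : ∀ y, BddAbove (Set.range fun k => f' k y) := fun y =>
    ⟨C', by rintro _ ⟨k, rfl⟩; exact hC' k y⟩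
  -- the pointwise sups agree
  have hss : ∀ y, (⨆ k, f k y) = ⨆ k, f' k y := by
    intro y
    apply le_antisymm
    · refine ciSup_le fun k₀ => le_of_forall_pos_le_add fun ε hε => ?_
      obtain ⟨k, h1, -⟩ := h ε hε k₀
      have := h1 y
      have hk : f' k y ≤ ⨆ j, f' j y := le_ciSup (hbddf' y) k
      linarith
    · refine ciSup_le fun k₀ => le_of_forall_pos_le_add fun ε hε => ?_
      obtain ⟨k, -, h2⟩ := h ε hε k₀
      have := h2 y
      have hk : f k y ≤ ⨆ j, f j y := le_ciSup (hbddf y) k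
      linarith
  refine ⟨hEf', fun x => ?_⟩
  have hfs : Tendsto (fun k => f k x) atTop (𝓝 (⨆ k, f k x)) :=
    tendsto_atTop_ciSup (hfmono x) (hbddf x)
  have hf's : Tendsto (fun k => f' k x) atTop (𝓝 (⨆ k, f' k x)) :=
    tendsto_atTop_ciSup (hf'mono x) (hbddf' x)
  by_cases hb : ∃ b, ∀ᶠ y in 𝓝 x, E y ≤ b
  · -- E locally bounded above at x : the genuine case
    obtain ⟨b, hb⟩ := hb
    obtain ⟨-, -, hLten⟩ := limsup_mono_facts f E x b hb hf0 hEf hfmono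
    obtain ⟨-, -, hL'ten⟩ := limsup_mono_facts f' E x b hb hf'0 hEf' hf'mono
    have hAA' : (⨅ k, limsup (fun y => E y - f' k y) (𝓝 x)) =
        ⨅ k, limsup (fun y => E y - f k y) (𝓝 x) := by
      apply le_antisymm
      · exact iInf_limsup_le f f' E x b hb hf0 hEf hf'0 hEf'
          (fun ε hε k₀ => (h ε hε k₀).imp fun k hk => hk.1)
      · exact iInf_limsup_le f' f E x b hb hf'0 hEf' hf0 hEf
          (fun ε hε k₀ => (h ε hε k₀).imp fun k hk => hk.2)
    have hdF : Tendsto (fun k => defect (fun y => E y - f k y) x) atTop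
        (𝓝 ((⨅ k, limsup (fun y => E y - f k y) (𝓝 x)) - (E x - ⨆ k, f k x))) := by
      simpa only [defect, uscEnv] using hLten.sub (hfs.const_sub (E x))
    have hzero : (⨅ k, limsup (fun y => E y - f k y) (𝓝 x)) - (E x - ⨆ k, f k x) = 0 :=
      tendsto_nhds_unique hdF (hdef x)
    have hdF' : Tendsto (fun k => defect (fun y => E y - f' k y) x) atTop
        (𝓝 ((⨅ k, limsup (fun y => E y - f' k y) (𝓝 x)) - (E x - ⨆ k, f' k x))) := by
      simpa only [defect, uscEnv] using hL'ten.sub (hf's.const_sub (E x))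
    have : (⨅ k, limsup (fun y => E y - f' k y) (𝓝 x)) - (E x - ⨆ k, f' k x) = 0 := by
      rw [hAA', ← hss x]; exact hzero
    rwa [this] at hdF'
  · -- degenerate case: E is unbounded on every neighbourhood of x
    have limzero : ∀ (g : ℕ → M → ℝ) (D : ℝ), (∀ k y, g k y ≤ D) →
        ∀ k, uscEnv (fun y => E y - g k y) x = 0 := by
      intro g D hD k
      show limsup _ (𝓝 x) = 0
      rw [Filter.limsup_eq]
      have : {a | ∀ᶠ y in 𝓝 x, E y - g k y ≤ a} = ∅ := by
        rw [Set.eq_empty_iff_forall_notMem]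
        intro a ha
        exact hb ⟨a + D, ha.mono fun y hy => by have := hD k y; linarith⟩
      rw [this, Real.sInf_empty]
    have hdf : ∀ k, defect (fun y => E y - f k y) x = f k x - E x := by
      intro k; simp only [defect, limzero f C hC k]; ring
    have hdf' : ∀ k, defect (fun y => E y - f' k y) x = f' k x - E x := by
      intro k; simp only [defect, limzero f' C' hC' k]; ring
    have h1 : Tendsto (fun k => f k x - E x) atTop (𝓝 ((⨆ k, f k x) - E x)) :=
      hfs.sub_const (E x)
    have h2 : (⨆ k, f k x) - E x = 0 :=
      tendsto_nhds_unique h1 ((hdef x).congr hdf)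
    have h3 : Tendsto (fun k => f' k x - E x) atTop (𝓝 ((⨆ k, f' k x) - E x)) :=
      hf's.sub_const (E x)
    have h4 : (⨆ k, f' k x) - E x = 0 := by rw [← hss x]; exact h2
    rw [h4] at h3
    exact h3.congr fun k => (hdf' k).symm

theorem stmt8 {M : Type*} [MetricSpace M] [CompactSpace M]
    (f f' : ℕ → M → ℝ) (hf : IsEntStructure f) (hf' : IsEntStructure f')
    (h : UnifEquiv f f') :
    (∀ E : M → EReal, IsSuperenvelope f E ↔ IsSuperenvelope f' E) ∧
    (fun x => ⨅ E : {E : M → EReal // IsSuperenvelope f E}, E.1 x) =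
      (fun x => ⨅ E : {E : M → EReal // IsSuperenvelope f' E}, E.1 x) := by
  have hsym : UnifEquiv f' f := fun ε hε k₀ => (h ε hε k₀).imp fun k hk => ⟨hk.2, hk.1⟩
  have hiff : ∀ E : M → EReal, IsSuperenvelope f E ↔ IsSuperenvelope f' E := by
    intro E
    constructor
    · rintro (ht | ⟨E', hE', hfin⟩)
      · exact Or.inl ht
      · exact Or.inr ⟨E', hE', finTransfer hf hf' h hfin⟩
    · rintro (ht | ⟨E', hE', hfin⟩)
      · exact Or.inl ht
      · exact Or.inr ⟨E', hE', finTransfer hf' hf hsym hfin⟩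
  refine ⟨hiff, ?_⟩
  funext x
  apply le_antisymm
  · exact le_iInf fun E => iInf_le_of_le ⟨E.1, (hiff E.1).mpr E.2⟩ le_rfl
  · exact le_iInf fun E => iInf_le_of_le ⟨E.1, (hiff E.1).mp E.2⟩ le_rfl
end

section
/- If a sequence (a_F) indexed by finite subsets of a countable amenable group G is nonnegative, G-invariant (a_{Fg} = a_F), and strongly subadditive (a_{F₁∪F₂} ≤ a_{F₁} + a_{F₂} − a_{F₁∩F₂}, with a_∅ = 0), then for every Følner sequence (F_n), the limit of a_{F_n}/|F_n| exists and equals inf over finite nonempty F of a_F/|F|. -/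
open Filter Topology Pointwise

/-- `F` is `(K,ε)`-invariant: `|KF △ F| / |F| < ε`. -/
def KInvariant {G : Type*} [Group G] [DecidableEq G] (K F : Finset G) (ε : ℝ) : Prop :=
  (((K * F) \ F ∪ F \ (K * F)).card : ℝ) / F.card < ε

/-- A Følner sequence of finite subsets of `G`. -/
def FolnerSeq {G : Type*} [Group G] [DecidableEq G] (Fo : ℕ → Finset G) : Prop :=
  (∀ n, (Fo n).Nonempty) ∧
  ∀ K : Finset G, ∀ ε > (0 : ℝ), ∀ᶠ n in atTop, KInvariant K (Fo n) ε

/-!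
Fix a finite nonempty `F` and a large, almost `FF⁻¹`-invariant `E`. The translates `Fg`, `g ∈ F⁻¹E`,
cut out of `E` a family of sets `E ∩ Fg` covering every point of `E` exactly `|F|` times, so by
Shearer's inequality for strongly subadditive functions `|F| a(E) ≤ ∑_g a(E ∩ Fg)`. At most `|E|`
of the translates lie inside `E`, where the term is `a(F)`; for the others `g ∈ F⁻¹(FF⁻¹E \ E)`,
so there are at most `|F| |FF⁻¹E \ E|` of them, each contributing at most `|F| a({1})`.
Dividing by `|F| |E|` gives `a(E)/|E| ≤ a(F)/|F| + o(1)` along a Følner sequence,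
while `a(E)/|E|` is never below the infimum.
-/

open Finset

def StronglySubadditive {α : Type*} [DecidableEq α] (a : Finset α → ℝ) : Prop :=
  ∀ F₁ F₂ : Finset α, a (F₁ ∪ F₂) ≤ a F₁ + a F₂ - a (F₁ ∩ F₂)

section StronglySubadditive

variable {α : Type*} [DecidableEq α] {a : Finset α → ℝ}

/-- The weights are the increments of `a` along an enumeration of `E`; strong subadditivity says
that an increment can only grow when it is taken over a smaller set. -/
theorem StronglySubadditive.exists_modular_minorant (hssub : StronglySubadditive a)
    (h0 : a ∅ = 0) (E : Finset α) :
    ∃ w : α → ℝ, ∑ x ∈ E, w x = a E ∧ ∀ A ⊆ E, ∑ x ∈ A, w x ≤ a A := by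
  induction E using Finset.induction_on with
  | empty => exact ⟨0, by simp [h0], fun A hA => by simp [subset_empty.1 hA, h0]⟩
  | @insert x E hx ih =>
    obtain ⟨w, hwE, hw⟩ := ih
    set w' := Function.update w x (a (insert x E) - a E)
    have hw'E : ∀ A ⊆ E, ∑ y ∈ A, w' y = ∑ y ∈ A, w y := fun A hA =>
      sum_congr rfl fun y hy => Function.update_of_ne (ne_of_mem_of_not_mem (hA hy) hx) _ _
    have hw'x : w' x = a (insert x E) - a E := Function.update_self ..
    refine ⟨w', ?_, fun A hA => ?_⟩
    · rw [sum_insert hx, hw'E E subset_rfl, hw'x]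
      linarith
    by_cases hxA : x ∈ A
    · have hunion : A ∪ E = insert x E := by
        ext y; have := @hA y; simp only [mem_union, mem_insert] at this ⊢; grind
      have hinter : A ∩ E = A.erase x := by
        ext y; have := @hA y; simp only [mem_inter, mem_erase, mem_insert] at this ⊢; grind
      have herase : A.erase x ⊆ E := hinter ▸ inter_subset_right
      have := hssub A E
      rw [hunion, hinter] at this
      rw [← add_sum_erase A _ hxA, hw'E _ herase, hw'x]
      linarith [hw _ herase]
    · have hAE : A ⊆ E := fun y hy =>
        (mem_insert.1 (hA hy)).resolve_left fun h => hxA (h ▸ hy)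
      rw [hw'E A hAE]
      exact hw A hAE

/-- Shearer's inequality. -/
theorem StronglySubadditive.card_mul_le_sum {ι : Type*} (hssub : StronglySubadditive a)
    (h0 : a ∅ = 0) {E : Finset α} {k : ℕ} (s : Finset ι) (A : ι → Finset α)
    (hsub : ∀ i ∈ s, A i ⊆ E) (hcov : ∀ x ∈ E, #{i ∈ s | x ∈ A i} = k) :
    k * a E ≤ ∑ i ∈ s, a (A i) := by
  obtain ⟨w, hwE, hw⟩ := hssub.exists_modular_minorant h0 E
  calc (k : ℝ) * a E = ∑ x ∈ E, ∑ i ∈ s with x ∈ A i, w x := by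
        rw [← hwE, mul_sum]
        refine sum_congr rfl fun x hx => ?_
        rw [sum_const, hcov x hx, nsmul_eq_mul]
    _ = ∑ i ∈ s, ∑ x ∈ A i, w x := by
        refine sum_comm' fun x i => ?_
        simp only [mem_filter]
        exact ⟨fun ⟨_, hi, hxi⟩ => ⟨hxi, hi⟩, fun ⟨hxi, hi⟩ => ⟨hsub i hi hxi, hi, hxi⟩⟩
    _ ≤ ∑ i ∈ s, a (A i) := sum_le_sum fun i hi => hw _ (hsub i hi)

end StronglySubadditive

section Group

variable {G : Type*} [Group G] [DecidableEq G]

theorem filter_mem_inter_image_mul_right {F E : Finset G} {x : G} (hx : x ∈ E) :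
    {g ∈ F⁻¹ * E | x ∈ E ∩ F.image (· * g)} = F⁻¹ * {x} := by
  ext g
  simp only [mem_filter, mem_inter, mem_image, Finset.mem_mul, Finset.mem_inv]
  constructor
  · rintro ⟨-, -, f, hf, rfl⟩
    exact ⟨f⁻¹, ⟨f, hf, rfl⟩, f * g, mem_singleton_self _, by group⟩
  · rintro ⟨_, ⟨f, hf, rfl⟩, y, hy, rfl⟩
    obtain rfl : x = y := (mem_singleton.1 hy).symm
    exact ⟨⟨f⁻¹, ⟨f, hf, rfl⟩, x, hx, rfl⟩, hx, f, hf, by group⟩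

theorem filter_not_image_mul_right_subset {F E : Finset G} :
    {g ∈ F⁻¹ * E | ¬ F.image (· * g) ⊆ E} ⊆ F⁻¹ * ((F * F⁻¹ * E) \ E) := by
  intro g hg
  simp only [mem_filter, Finset.mem_mul, Finset.mem_inv, not_subset, mem_image] at hg
  obtain ⟨⟨_, ⟨f, hf, rfl⟩, e, he, rfl⟩, _, ⟨f', hf', rfl⟩, hout⟩ := hg
  refine Finset.mem_mul.2 ⟨f'⁻¹, inv_mem_inv hf', f' * (f⁻¹ * e), mem_sdiff.2 ⟨?_, hout⟩, by group⟩
  exact Finset.mem_mul.2 ⟨f' * f⁻¹, mul_mem_mul hf' (inv_mem_inv hf), e, he, by group⟩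

variable {a : Finset G → ℝ}

theorem StronglySubadditive.le_card_mul_singleton_one (hssub : StronglySubadditive a)
    (h0 : a ∅ = 0) (hinv : ∀ (F : Finset G) (g : G), a (F.image (fun f => f * g)) = a F)
    (S : Finset G) : a S ≤ #S * a {1} := by
  induction S using Finset.induction_on with
  | empty => simp [h0]
  | @insert x S hx ih =>
    have hx1 : a {x} = a {1} := by simpa using hinv {1} x
    have := hssub {x} S
    rw [singleton_inter_of_notMem hx, h0, ← insert_eq] at this
    rw [card_insert_of_notMem hx]
    push_cast
    linarith

theorem StronglySubadditive.card_mul_le_card_mul_add (hssub : StronglySubadditive a) (h0 : a ∅ = 0)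
    (hnn : ∀ F, 0 ≤ a F) (hinv : ∀ (F : Finset G) (g : G), a (F.image (fun f => f * g)) = a F)
    {F : Finset G} (hF : F.Nonempty) (E : Finset G) :
    #F * a E ≤ #E * a F + #F ^ 2 * a {1} * #((F * F⁻¹ * E) \ E) := by
  set T : G → Finset G := fun g => F.image (· * g)
  set good := {g ∈ F⁻¹ * E | T g ⊆ E}
  set bad := {g ∈ F⁻¹ * E | ¬ T g ⊆ E}
  have hshearer : #F * a E ≤ ∑ g ∈ F⁻¹ * E, a (E ∩ T g) :=
    hssub.card_mul_le_sum h0 _ _ (fun _ _ => inter_subset_left) fun x hx => by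
      rw [filter_mem_inter_image_mul_right hx, card_mul_singleton, card_inv]
  have hgood : ∑ g ∈ good, a (E ∩ T g) ≤ #E * a F := by
    obtain ⟨f, hf⟩ := hF
    have hcard : #good ≤ #E := by
      refine le_trans (card_le_card fun g hg => ?_) (card_image_le (f := (f⁻¹ * ·)))
      exact mem_image.2 ⟨f * g, (mem_filter.1 hg).2 (mem_image_of_mem _ hf), by group⟩
    rw [sum_congr rfl fun g hg => by rw [inter_eq_right.2 (mem_filter.1 hg).2, hinv],
      sum_const, nsmul_eq_mul]
    exact mul_le_mul_of_nonneg_right (by exact_mod_cast hcard) (hnn F)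
  have hbad : ∑ g ∈ bad, a (E ∩ T g) ≤ #F ^ 2 * a {1} * #((F * F⁻¹ * E) \ E) := by
    have hterm : ∀ g ∈ bad, a (E ∩ T g) ≤ #F * a {1} := fun g _ =>
      (hssub.le_card_mul_singleton_one h0 hinv _).trans <| mul_le_mul_of_nonneg_right
        (by exact_mod_cast (card_le_card inter_subset_right).trans card_image_le) (hnn _)
    have hcard : #bad ≤ #F * #((F * F⁻¹ * E) \ E) :=
      (card_le_card filter_not_image_mul_right_subset).trans
        (card_mul_le.trans_eq (by rw [card_inv]))
    calc ∑ g ∈ bad, a (E ∩ T g) ≤ #bad * (#F * a {1}) := by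
          simpa using sum_le_card_nsmul _ _ _ hterm
      _ ≤ (#F * #((F * F⁻¹ * E) \ E) : ℕ) * (#F * a {1}) :=
          mul_le_mul_of_nonneg_right (by exact_mod_cast hcard)
            (mul_nonneg (Nat.cast_nonneg _) (hnn _))
      _ = #F ^ 2 * a {1} * #((F * F⁻¹ * E) \ E) := by push_cast; ring
  rw [← sum_filter_add_sum_filter_not _ (fun g => T g ⊆ E)] at hshearer
  linarith

theorem KInvariant.card_sdiff_div_card_lt {K E : Finset G} {ε : ℝ} (h : KInvariant K E ε) :
    (#((K * E) \ E) : ℝ) / #E < ε :=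
  lt_of_le_of_lt (div_le_div_of_nonneg_right (by exact_mod_cast card_le_card subset_union_left)
    (Nat.cast_nonneg _)) h

theorem StronglySubadditive.eventually_div_card_lt (hssub : StronglySubadditive a)
    (h0 : a ∅ = 0) (hnn : ∀ F, 0 ≤ a F)
    (hinv : ∀ (F : Finset G) (g : G), a (F.image (fun f => f * g)) = a F)
    {Fo : ℕ → Finset G} (hFo : FolnerSeq Fo) {F : Finset G} (hF : F.Nonempty) {ε : ℝ}
    (hε : 0 < ε) : ∀ᶠ n in atTop, a (Fo n) / #(Fo n) < a F / #F + ε := by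
  set C := #F * a {1}
  have hC : 0 ≤ C := mul_nonneg (Nat.cast_nonneg _) (hnn _)
  filter_upwards [hFo.2 (F * F⁻¹) (ε / (C + 1)) (by positivity)] with n hn
  set E := Fo n
  have hE : (0 : ℝ) < #E := by exact_mod_cast (hFo.1 n).card_pos
  have hF' : (0 : ℝ) < #F := by exact_mod_cast hF.card_pos
  have hsmall : C * (#((F * F⁻¹ * E) \ E) / #E) < ε := by
    have hD : (#((F * F⁻¹ * E) \ E) : ℝ) / #E < ε / (C + 1) := hn.card_sdiff_div_card_lt
    have : (C + 1) * (ε / (C + 1)) = ε := mul_div_cancel₀ _ (by positivity)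
    nlinarith [div_nonneg (Nat.cast_nonneg #((F * F⁻¹ * E) \ E) : (0 : ℝ) ≤ _) hE.le]
  have hkey := hssub.card_mul_le_card_mul_add h0 hnn hinv hF E
  have : a E / #E ≤ a F / #F + C * (#((F * F⁻¹ * E) \ E) / #E) := by
    rw [div_add' _ _ _ hF'.ne', div_le_div_iff₀ hE hF']
    have hcancel : C * (#((F * F⁻¹ * E) \ E) / #E) * #F * #E
        = #F ^ 2 * a {1} * #((F * F⁻¹ * E) \ E) := by
      simp only [C]; field_simp
    linarith
  linarith

end Group

theorem stmt17_general {G : Type*} [Group G] [DecidableEq G]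
    (a : Finset G → ℝ) (h0 : a ∅ = 0) (hnn : ∀ F, 0 ≤ a F)
    (hinv : ∀ (F : Finset G) (g : G), a (F.image (fun f => f * g)) = a F)
    (hssub : ∀ F₁ F₂ : Finset G, a (F₁ ∪ F₂) ≤ a F₁ + a F₂ - a (F₁ ∩ F₂))
    (Fo : ℕ → Finset G) (hFo : FolnerSeq Fo) :
    Tendsto (fun n => a (Fo n) / (Fo n).card) atTop
      (𝓝 (⨅ F : {F : Finset G // F.Nonempty}, a F.1 / F.1.card)) := by
  have : Nonempty {F : Finset G // F.Nonempty} := ⟨⟨{1}, singleton_nonempty 1⟩⟩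
  have hbdd : BddBelow (Set.range fun F : {F : Finset G // F.Nonempty} => a F.1 / #F.1) :=
    ⟨0, by rintro _ ⟨F, rfl⟩; exact div_nonneg (hnn _) (Nat.cast_nonneg _)⟩
  refine tendsto_order.2 ⟨fun b hb => Eventually.of_forall fun n =>
    hb.trans_le (ciInf_le hbdd ⟨Fo n, hFo.1 n⟩), fun b hb => ?_⟩
  obtain ⟨⟨F, hF⟩, hFb⟩ := exists_lt_of_ciInf_lt hb
  filter_upwards [StronglySubadditive.eventually_div_card_lt hssub h0 hnn hinv hFo hF
    (sub_pos.2 hFb)] with n hn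
  linarith

theorem stmt17 {G : Type*} [Group G] [DecidableEq G] [Countable G]
    (a : Finset G → ℝ) (h0 : a ∅ = 0) (hnn : ∀ F, 0 ≤ a F)
    (hinv : ∀ (F : Finset G) (g : G), a (F.image (fun f => f * g)) = a F)
    (hssub : ∀ F₁ F₂ : Finset G, a (F₁ ∪ F₂) ≤ a F₁ + a F₂ - a (F₁ ∩ F₂))
    (Fo : ℕ → Finset G) (hFo : FolnerSeq Fo) :
    Tendsto (fun n => a (Fo n) / (Fo n).card) atTop
      (𝓝 (⨅ F : {F : Finset G // F.Nonempty}, a F.1 / F.1.card)) :=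
  stmt17_general a h0 hnn hinv hssub Fo hFo
end
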